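/- arXiv:1908.09567 — 2 statements merged into one kernel-verified Lean document; each statement's English description precedes it below -/
import Mathlib

section
/- Any two generalized α-coverings Q^α and P^α for the same stratified Lie group (ℝⁿ, *_G) are weakly equivalent: sup_i #{j : P_j^α ∩ Q_i^α ≠ ∅} < ∞ and sup_j #{i : Q_i^α ∩ P_j^α ≠ ∅} < ∞. -/
open MeasureTheory

/-- The dilations of a stratified Lie group realized on `ℝⁿ` in coordinates adapted to the
stratification: coordinate `j` has degree `v j` and scales as `r ^ v j`. -/
def dil {n : ℕ} (v : Fin n → ℕ) (r : ℝ) (x : Fin n → ℝ) : Fin n → ℝ :=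
  fun j => r ^ v j * x j

/-- A stratified Lie group realized on `ℝⁿ` through the exponential map: a Lie group
structure `*_G` on `ℝⁿ` with identity `0`, together with degrees `deg j ≥ 1` of the
coordinates (adapted to the stratification) such that the associated dilations are group
automorphisms. -/
structure StratifiedGroup (n : ℕ) where
  mul : (Fin n → ℝ) → (Fin n → ℝ) → (Fin n → ℝ)
  inv : (Fin n → ℝ) → (Fin n → ℝ)
  mul_assoc' : ∀ x y z, mul (mul x y) z = mul x (mul y z)
  zero_mul' : ∀ x, mul 0 x = x
  mul_zero' : ∀ x, mul x 0 = x
  inv_mul' : ∀ x, mul (inv x) x = 0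
  continuous_mul' : Continuous fun p : (Fin n → ℝ) × (Fin n → ℝ) => mul p.1 p.2
  continuous_inv' : Continuous inv
  deg : Fin n → ℕ
  deg_pos : ∀ j, 1 ≤ deg j
  dil_mul : ∀ r : ℝ, 0 < r → ∀ x y, dil deg r (mul x y) = mul (dil deg r x) (dil deg r y)

/-- The homogeneous dimension `Q = ∑ j deg j` of a stratified group. -/
def StratifiedGroup.Q {n : ℕ} (S : StratifiedGroup n) : ℕ := ∑ j, S.deg j

/-- A homogeneous quasi-norm on a stratified Lie group: a continuous, nonnegative,
`1`-homogeneous (for the dilations), symmetric function vanishing exactly at the identity. -/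
structure IsQuasiNorm {n : ℕ} (S : StratifiedGroup n) (N : (Fin n → ℝ) → ℝ) : Prop where
  continuous : Continuous N
  nonneg : ∀ x, 0 ≤ N x
  homogeneous : ∀ r : ℝ, 0 < r → ∀ x, N (dil S.deg r x) = r * N x
  symm : ∀ x, N (S.inv x) = N x
  eq_zero_iff : ∀ x, N x = 0 ↔ x = 0

/-- The quasi-ball `B(c, R) = {h : ‖c⁻¹ *_G h‖ < R}`. -/
def qBall {n : ℕ} (S : StratifiedGroup n) (N : (Fin n → ℝ) → ℝ)
    (c : Fin n → ℝ) (R : ℝ) : Set (Fin n → ℝ) :=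
  {h | N (S.mul (S.inv c) h) < R}

/-- The inner radius of `P`: the supremum of radii of quasi-balls contained in `P`. -/
noncomputable def inRad {n : ℕ} (S : StratifiedGroup n) (N : (Fin n → ℝ) → ℝ)
    (P : Set (Fin n → ℝ)) : ℝ :=
  sSup {r : ℝ | ∃ c, qBall S N c r ⊆ P}

/-- The outer radius of `P`: the infimum of radii of quasi-balls containing `P`. -/
noncomputable def outRad {n : ℕ} (S : StratifiedGroup n) (N : (Fin n → ℝ) → ℝ)
    (P : Set (Fin n → ℝ)) : ℝ :=
  sInf {R : ℝ | ∃ c, P ⊆ qBall S N c R}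

/-- A generalized `α`-covering for the stratified Lie group `(ℝⁿ, *_G)` with respect to the
homogeneous quasi-norm `N`: an admissible covering of `ℝⁿ` by nonempty bounded open
connected sets of measure `≍ (1 + ‖ξᵢ‖²)^{αQ/2}`, with uniformly comparable inner and
outer quasi-ball radii. -/
structure GenAlphaCovering {n : ℕ} (S : StratifiedGroup n) (N : (Fin n → ℝ) → ℝ)
    (α : ℝ) (I : Type*) where
  P : I → Set (Fin n → ℝ)
  isOpen' : ∀ i, IsOpen (P i)
  nonempty' : ∀ i, (P i).Nonempty
  connected' : ∀ i, IsConnected (P i)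
  covers : ⋃ i, P i = Set.univ
  bounded' : ∀ i, Bornology.IsBounded (P i)
  admissible : ∃ M : ℕ, ∀ i, {j : I | (P i ∩ P j).Nonempty}.encard ≤ (M : ℕ∞)
  size : ∃ c : ℝ, 0 < c ∧ ∀ i, ∀ ξ ∈ P i,
    (volume (P i)).toReal ≤ c * (1 + N ξ ^ 2) ^ (α * (S.Q : ℝ) / 2) ∧
    (1 + N ξ ^ 2) ^ (α * (S.Q : ℝ) / 2) ≤ c * (volume (P i)).toReal
  ratio : ∃ K : ℝ, 1 ≤ K ∧ ∀ i, outRad S N (P i) ≤ K * inRad S N (P i)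

/-! Every piece of a generalized `α`-covering is comparable to a quasi-ball: by the ratio
condition it lies in a quasi-ball of radius `(κ |P|)^{1/Q}`, since Lebesgue measure is
left-invariant and scales like `r^Q` under the dilations. Any two homogeneous quasi-norms are
comparable, each being squeezed between multiples of the gauge `max_j |x_j|^{1/deg j}` by
compactness of the gauge sphere. Hence if `P₂ j` meets `P₁ i` at `ξ`, the two weights
`(1 + ‖ξ‖²)^{αQ/2}` agree up to constants and `|P₂ j| ≍ |P₁ i|`. The quasi-triangle inequality
then puts all pieces `P₂ j` meeting `P₁ i` into one quasi-ball of volume `≲ |P₁ i|`; each of them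
has volume `≳ |P₁ i|` and they overlap boundedly, so there are boundedly many of them. -/

theorem dil_dil {n : ℕ} (v : Fin n → ℕ) (r s : ℝ) (x : Fin n → ℝ) :
    dil v r (dil v s x) = dil v (r * s) x := by
  funext j; simp only [dil, mul_pow]; ring

theorem dil_one {n : ℕ} (v : Fin n → ℕ) (x : Fin n → ℝ) : dil v 1 x = x := by
  funext j; simp [dil]

namespace StratifiedGroup

variable {n : ℕ} (S : StratifiedGroup n)

def VolumeLeftInvariant : Prop :=
  ∀ (g : Fin n → ℝ) (A : Set (Fin n → ℝ)), volume ((fun h => S.mul g h) ⁻¹' A) = volume A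

theorem Q_ne_zero (hn : 0 < n) : S.Q ≠ 0 :=
  (Finset.sum_pos (fun j _ => S.deg_pos j) ⟨⟨0, hn⟩, Finset.mem_univ _⟩).ne'

theorem mul_inv_cancel (x : Fin n → ℝ) : S.mul x (S.inv x) = 0 :=
  calc S.mul x (S.inv x)
      = S.mul (S.mul (S.inv (S.inv x)) (S.inv x)) (S.mul x (S.inv x)) := by
        rw [S.inv_mul', S.zero_mul']
    _ = S.mul (S.inv (S.inv x)) (S.mul (S.mul (S.inv x) x) (S.inv x)) := by
        simp only [S.mul_assoc']
    _ = 0 := by rw [S.inv_mul', S.zero_mul', S.inv_mul']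

theorem mul_inv_cancel_left (x y : Fin n → ℝ) : S.mul x (S.mul (S.inv x) y) = y := by
  rw [← S.mul_assoc', S.mul_inv_cancel, S.zero_mul']

theorem eq_inv_of_mul_eq_zero {x y : Fin n → ℝ} (h : S.mul x y = 0) : x = S.inv y := by
  rw [← S.mul_zero' x, ← S.mul_inv_cancel y, ← S.mul_assoc', h, S.zero_mul']

theorem inv_zero : S.inv 0 = 0 := (S.mul_zero' _).symm.trans (S.inv_mul' 0)

theorem inv_inv (x : Fin n → ℝ) : S.inv (S.inv x) = x :=
  (S.eq_inv_of_mul_eq_zero (S.mul_inv_cancel x)).symm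

theorem mul_inv_rev (x y : Fin n → ℝ) : S.inv (S.mul x y) = S.mul (S.inv y) (S.inv x) := by
  refine (S.eq_inv_of_mul_eq_zero ?_).symm
  rw [S.mul_assoc', ← S.mul_assoc' (S.inv x), S.inv_mul', S.zero_mul', S.inv_mul']

theorem continuous_mul_left (g : Fin n → ℝ) : Continuous fun h => S.mul g h :=
  S.continuous_mul'.comp (continuous_const.prodMk continuous_id)

noncomputable def gauge (x : Fin n → ℝ) : ℝ :=
  ↑(Finset.univ.sup fun j => ‖x j‖₊ ^ ((S.deg j : ℝ)⁻¹))

theorem gauge_nonneg (x : Fin n → ℝ) : 0 ≤ S.gauge x := NNReal.coe_nonneg _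

theorem continuous_gauge : Continuous S.gauge :=
  NNReal.continuous_coe.comp <| Continuous.finset_sup_apply fun j _ =>
    (NNReal.continuous_rpow_const (by positivity)).comp
      (continuous_nnnorm.comp (continuous_apply j))

theorem gauge_le_iff {t : ℝ} (ht : 0 ≤ t) (x : Fin n → ℝ) :
    S.gauge x ≤ t ↔ ∀ j, |x j| ≤ t ^ S.deg j := by
  lift t to NNReal using ht
  simp only [gauge, NNReal.coe_le_coe, Finset.sup_le_iff, Finset.mem_univ, true_implies]
  refine forall_congr' fun j => ?_
  rw [NNReal.rpow_inv_le_iff (by exact_mod_cast S.deg_pos j), NNReal.rpow_natCast,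
    ← NNReal.coe_le_coe, coe_nnnorm, NNReal.coe_pow, Real.norm_eq_abs]

theorem gauge_eq_zero_iff (x : Fin n → ℝ) : S.gauge x = 0 ↔ x = 0 := by
  rw [← (S.gauge_nonneg x).ge_iff_eq', S.gauge_le_iff le_rfl, funext_iff]
  refine forall_congr' fun j => ?_
  rw [zero_pow (by have := S.deg_pos j; omega), abs_nonpos_iff, Pi.zero_apply]

theorem gauge_dil {r : ℝ} (hr : 0 < r) (x : Fin n → ℝ) :
    S.gauge (dil S.deg r x) = r * S.gauge x := by
  refine eq_of_forall_ge_iff fun t => ?_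
  rcases lt_or_ge t 0 with ht | ht
  · have h₁ := S.gauge_nonneg (dil S.deg r x)
    have h₂ := mul_nonneg hr.le (S.gauge_nonneg x)
    exact iff_of_false (by linarith) (by linarith)
  rw [S.gauge_le_iff ht, ← le_div_iff₀' hr, S.gauge_le_iff (div_nonneg ht hr.le)]
  refine forall_congr' fun j => ?_
  rw [dil, abs_mul, abs_of_pos (pow_pos hr _), div_pow, le_div_iff₀' (pow_pos hr _)]

theorem isCompact_gauge_le {t : ℝ} (ht : 0 ≤ t) : IsCompact {x | S.gauge x ≤ t} := by
  have : {x | S.gauge x ≤ t} = Set.univ.pi fun j => Set.Icc (-t ^ S.deg j) (t ^ S.deg j) := by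
    ext x
    simp only [Set.mem_ofPred_eq, S.gauge_le_iff ht, Set.mem_pi, Set.mem_univ, true_implies,
      Set.mem_Icc, abs_le]
  rw [this]
  exact isCompact_univ_pi fun _ => isCompact_Icc

end StratifiedGroup

namespace IsQuasiNorm

variable {n : ℕ} {S : StratifiedGroup n} {N N' : (Fin n → ℝ) → ℝ}

theorem map_zero (hN : IsQuasiNorm S N) : N 0 = 0 := (hN.eq_zero_iff 0).2 rfl

theorem eq_mul_apply_dil_inv (hN : IsQuasiNorm S N) {t : ℝ} (ht : 0 < t) (x : Fin n → ℝ) :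
    N x = t * N (dil S.deg t⁻¹ x) := by
  rw [← hN.homogeneous t ht, dil_dil, mul_inv_cancel₀ ht.ne', dil_one]

theorem exists_gauge_sandwich (hN : IsQuasiNorm S N) :
    ∃ m M : ℝ, 0 < m ∧ 0 < M ∧ ∀ x, m * S.gauge x ≤ N x ∧ N x ≤ M * S.gauge x := by
  have hsph : IsCompact {x | S.gauge x = 1} :=
    (S.isCompact_gauge_le zero_le_one).of_isClosed_subset
      (isClosed_eq S.continuous_gauge continuous_const) fun x hx => le_of_eq hx
  obtain ⟨m, hm, hmN⟩ := hsph.exists_forall_le' hN.continuous.continuousOn (a := 0)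
    fun x hx => (hN.nonneg x).lt_of_ne' fun h => by
      rw [Set.mem_ofPred_eq, (hN.eq_zero_iff x).1 h, (S.gauge_eq_zero_iff 0).2 rfl] at hx
      exact zero_ne_one hx
  obtain ⟨M, hM⟩ := hsph.bddAbove_image hN.continuous.continuousOn
  refine ⟨m, max M 1, hm, by positivity, fun x => ?_⟩
  rcases (S.gauge_nonneg x).eq_or_lt with h0 | hpos
  · rw [← h0, (S.gauge_eq_zero_iff x).1 h0.symm, hN.map_zero]
    simp
  · set u := dil S.deg (S.gauge x)⁻¹ x
    have hu : S.gauge u = 1 := by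
      rw [S.gauge_dil (inv_pos.2 hpos), inv_mul_cancel₀ hpos.ne']
    rw [hN.eq_mul_apply_dil_inv hpos x, mul_comm m, mul_comm (max M 1)]
    exact ⟨mul_le_mul_of_nonneg_left (hmN u hu) hpos.le,
      mul_le_mul_of_nonneg_left ((hM ⟨u, hu, rfl⟩).trans (le_max_left _ _)) hpos.le⟩

theorem exists_le_mul (hN : IsQuasiNorm S N) (hN' : IsQuasiNorm S N') :
    ∃ a : ℝ, ∀ x, N' x ≤ a * N x := by
  obtain ⟨m, _, hm, _, hmN⟩ := hN.exists_gauge_sandwich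
  obtain ⟨_, M, _, hM, hMN⟩ := hN'.exists_gauge_sandwich
  refine ⟨M / m, fun x => ?_⟩
  calc N' x ≤ M * S.gauge x := (hMN x).2
    _ = M / m * (m * S.gauge x) := by field_simp
    _ ≤ M / m * N x := mul_le_mul_of_nonneg_left (hmN x).1 (by positivity)

theorem exists_comparable (hN : IsQuasiNorm S N) (hN' : IsQuasiNorm S N') :
    ∃ a : ℝ, 1 ≤ a ∧ ∀ x, N' x ≤ a * N x ∧ N x ≤ a * N' x := by
  obtain ⟨a, ha⟩ := hN.exists_le_mul hN'
  obtain ⟨a', ha'⟩ := hN'.exists_le_mul hN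
  refine ⟨max (max a a') 1, le_max_right _ _, fun x => ⟨?_, ?_⟩⟩
  · exact (ha x).trans (mul_le_mul_of_nonneg_right (le_max_of_le_left (le_max_left _ _))
      (hN.nonneg x))
  · exact (ha' x).trans (mul_le_mul_of_nonneg_right (le_max_of_le_left (le_max_right _ _))
      (hN'.nonneg x))

theorem exists_le_mul_add (hN : IsQuasiNorm S N) :
    ∃ C : ℝ, 0 < C ∧ ∀ x y, N (S.mul x y) ≤ C * (N x + N y) := by
  obtain ⟨m, _, hm, _, hmN⟩ := hN.exists_gauge_sandwich
  obtain ⟨C₀, hC₀⟩ := ((S.isCompact_gauge_le zero_le_one).prod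
    (S.isCompact_gauge_le zero_le_one)).bddAbove_image
    (hN.continuous.comp S.continuous_mul').continuousOn
  refine ⟨max C₀ 1 / m, by positivity, fun x y => ?_⟩
  have hx := S.gauge_nonneg x
  have hy := S.gauge_nonneg y
  set t := S.gauge x + S.gauge y
  rcases (add_nonneg hx hy).eq_or_lt with h0 | ht
  · rw [(S.gauge_eq_zero_iff x).1 (by linarith), (S.gauge_eq_zero_iff y).1 (by linarith),
      S.zero_mul', hN.map_zero]
    simp
  have hdil : ∀ z, S.gauge z ≤ t → S.gauge (dil S.deg t⁻¹ z) ≤ 1 := fun z hz => by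
    rwa [S.gauge_dil (inv_pos.2 ht), inv_mul_le_iff₀ ht, mul_one]
  have hbound : N (S.mul (dil S.deg t⁻¹ x) (dil S.deg t⁻¹ y)) ≤ max C₀ 1 :=
    (hC₀ ⟨(_, _), ⟨hdil x (by linarith), hdil y (by linarith)⟩, rfl⟩).trans (le_max_left _ _)
  calc N (S.mul x y) = t * N (S.mul (dil S.deg t⁻¹ x) (dil S.deg t⁻¹ y)) := by
        rw [← S.dil_mul _ (inv_pos.2 ht), ← hN.eq_mul_apply_dil_inv ht]
    _ ≤ t * max C₀ 1 := mul_le_mul_of_nonneg_left hbound ht.le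
    _ = max C₀ 1 / m * (m * S.gauge x + m * S.gauge y) := by simp only [t]; field_simp
    _ ≤ max C₀ 1 / m * (N x + N y) :=
        mul_le_mul_of_nonneg_left (add_le_add (hmN x).1 (hmN y).1) (by positivity)

theorem apply_inv_mul_comm (hN : IsQuasiNorm S N) (x y : Fin n → ℝ) :
    N (S.mul (S.inv x) y) = N (S.mul (S.inv y) x) := by
  rw [← hN.symm, S.mul_inv_rev, S.inv_inv]

theorem exists_subset_qBall_of_inter_nonempty (hN : IsQuasiNorm S N) :
    ∃ Λ : ℝ, 0 < Λ ∧ ∀ (A B : Set (Fin n → ℝ)) (c c' : Fin n → ℝ) (r : ℝ),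
      A ⊆ qBall S N c r → B ⊆ qBall S N c' r → (A ∩ B).Nonempty →
        B ⊆ qBall S N c (Λ * r) := by
  obtain ⟨C, hC, htri⟩ := hN.exists_le_mul_add
  have hsplit : ∀ x y z, N (S.mul (S.inv x) z) ≤
      C * (N (S.mul (S.inv x) y) + N (S.mul (S.inv y) z)) := fun x y z => by
    simpa only [S.mul_assoc', S.mul_inv_cancel_left] using
      htri (S.mul (S.inv x) y) (S.mul (S.inv y) z)
  refine ⟨C * (1 + 2 * C), by positivity, fun A B c c' r hA hB ⟨ξ, hξA, hξB⟩ h hh => ?_⟩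
  have h₁ : N (S.mul (S.inv c) ξ) < r := hA hξA
  have h₂ : N (S.mul (S.inv ξ) c') < r := by rw [hN.apply_inv_mul_comm]; exact hB hξB
  have h₃ : N (S.mul (S.inv c') h) < r := hB hh
  calc N (S.mul (S.inv c) h)
      ≤ C * (N (S.mul (S.inv c) ξ) + C * (N (S.mul (S.inv ξ) c') + N (S.mul (S.inv c') h))) :=
        (hsplit c ξ h).trans (by gcongr; exact hsplit ξ c' h)
    _ < C * (r + C * (r + r)) := by gcongr
    _ = C * (1 + 2 * C) * r := by ring

end IsQuasiNorm

theorem volume_dil_image {n : ℕ} (S : StratifiedGroup n) {r : ℝ} (hr : 0 < r)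
    (A : Set (Fin n → ℝ)) :
    volume (dil S.deg r '' A) = ENNReal.ofReal (r ^ S.Q) * volume A := by
  have hlin : dil S.deg r = ⇑(Matrix.toLin' (Matrix.diagonal fun j => r ^ S.deg j)) := by
    funext x j
    rw [Matrix.toLin'_apply, Matrix.mulVec_diagonal]
    rfl
  rw [hlin, Measure.addHaar_image_linearMap, LinearMap.det_toLin', Matrix.det_diagonal,
    Finset.prod_pow_eq_pow_sum, abs_of_pos (pow_pos hr _)]
  rfl

section QBall

variable {n : ℕ} {S : StratifiedGroup n} {N : (Fin n → ℝ) → ℝ}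

theorem qBall_mono (c : Fin n → ℝ) {r r' : ℝ} (h : r ≤ r') :
    qBall S N c r ⊆ qBall S N c r' := fun _ hx => lt_of_lt_of_le hx h

theorem qBall_subset_qBall_of_le_mul {N' : (Fin n → ℝ) → ℝ} {a : ℝ} (ha : 0 < a)
    (h : ∀ x, N' x ≤ a * N x) (c : Fin n → ℝ) (r : ℝ) :
    qBall S N c r ⊆ qBall S N' c (a * r) := fun _ hx =>
  (h _).trans_lt (mul_lt_mul_of_pos_left hx ha)

theorem isOpen_qBall (hN : IsQuasiNorm S N) (c : Fin n → ℝ) (r : ℝ) :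
    IsOpen (qBall S N c r) :=
  (isOpen_lt hN.continuous continuous_const).preimage (S.continuous_mul_left _)

theorem setOf_lt_eq_dil_image (hN : IsQuasiNorm S N) {r : ℝ} (hr : 0 < r) :
    {x | N x < r} = dil S.deg r '' {x | N x < 1} := by
  ext x
  refine ⟨fun hx => ⟨dil S.deg r⁻¹ x, ?_, by rw [dil_dil, mul_inv_cancel₀ hr.ne', dil_one]⟩, ?_⟩
  · rwa [Set.mem_ofPred_eq, hN.homogeneous _ (inv_pos.2 hr), inv_mul_lt_iff₀ hr, mul_one]
  · rintro ⟨y, hy, rfl⟩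
    rw [Set.mem_ofPred_eq, hN.homogeneous r hr]
    exact mul_lt_of_lt_one_right hr hy

theorem volume_qBall (hN : IsQuasiNorm S N) (hS : S.VolumeLeftInvariant) (c : Fin n → ℝ)
    {r : ℝ} (hr : 0 < r) :
    volume (qBall S N c r) = ENNReal.ofReal (r ^ S.Q) * volume {x | N x < 1} := by
  change volume ((fun h => S.mul (S.inv c) h) ⁻¹' {x | N x < r}) = _
  rw [hS, setOf_lt_eq_dil_image hN hr, volume_dil_image S hr]

theorem volume_setOf_lt_one_pos (hN : IsQuasiNorm S N) : 0 < volume {x | N x < 1} :=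
  (isOpen_lt hN.continuous continuous_const).measure_pos volume
    ⟨0, by rw [Set.mem_ofPred_eq, hN.map_zero]; exact one_pos⟩

theorem volume_setOf_lt_one_lt_top (hN : IsQuasiNorm S N) : volume {x | N x < 1} < ⊤ := by
  obtain ⟨m, _, hm, _, hmN⟩ := hN.exists_gauge_sandwich
  refine lt_of_le_of_lt (measure_mono fun x (hx : N x < 1) => ?_)
    (S.isCompact_gauge_le (one_div_pos.2 hm).le).measure_lt_top
  exact (le_div_iff₀' hm).2 ((hmN x).1.trans hx.le)

theorem volume_qBall_lt_top (hN : IsQuasiNorm S N) (hS : S.VolumeLeftInvariant)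
    (c : Fin n → ℝ) (r : ℝ) : volume (qBall S N c r) < ⊤ := by
  refine (measure_mono (qBall_mono c (le_max_left r 1))).trans_lt ?_
  rw [volume_qBall hN hS c (by positivity)]
  exact ENNReal.mul_lt_top ENNReal.ofReal_lt_top (volume_setOf_lt_one_lt_top hN)

theorem measureReal_qBall (hN : IsQuasiNorm S N) (hS : S.VolumeLeftInvariant)
    (c : Fin n → ℝ) {r : ℝ} (hr : 0 < r) :
    volume.real (qBall S N c r) = r ^ S.Q * volume.real {x | N x < 1} := by
  rw [measureReal_def, volume_qBall hN hS c hr, ENNReal.toReal_mul,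
    ENNReal.toReal_ofReal (pow_nonneg hr.le _), measureReal_def]

theorem measureReal_setOf_lt_one_pos (hN : IsQuasiNorm S N) :
    0 < volume.real {x | N x < 1} :=
  ENNReal.toReal_pos (volume_setOf_lt_one_pos hN).ne' (volume_setOf_lt_one_lt_top hN).ne

end QBall

section Radius

variable {n : ℕ} {S : StratifiedGroup n} {N : (Fin n → ℝ) → ℝ} {P : Set (Fin n → ℝ)}

theorem exists_qBall_subset_of_lt_inRad (hN : IsQuasiNorm S N) {r : ℝ}
    (hr : r < inRad S N P) : ∃ c, qBall S N c r ⊆ P := by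
  have hne : {r : ℝ | ∃ c, qBall S N c r ⊆ P}.Nonempty :=
    ⟨0, 0, fun x hx => absurd hx (not_lt.2 (hN.nonneg _))⟩
  obtain ⟨r', ⟨c, hc⟩, hr'⟩ := exists_lt_of_lt_csSup hne hr
  exact ⟨c, (qBall_mono c hr'.le).trans hc⟩

theorem exists_subset_qBall_of_outRad_lt (hN : IsQuasiNorm S N) (hP : Bornology.IsBounded P)
    {R : ℝ} (hR : outRad S N P < R) : ∃ c, P ⊆ qBall S N c R := by
  obtain ⟨C, hC⟩ := hP.isCompact_closure.bddAbove_image hN.continuous.continuousOn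
  have hne : {R : ℝ | ∃ c, P ⊆ qBall S N c R}.Nonempty := by
    refine ⟨C + 1, 0, fun x hx => ?_⟩
    change N (S.mul (S.inv 0) x) < C + 1
    rw [S.inv_zero, S.zero_mul']
    exact (hC ⟨x, subset_closure hx, rfl⟩).trans_lt (lt_add_one C)
  obtain ⟨R', ⟨c, hc⟩, hR'⟩ := exists_lt_of_csInf_lt hne hR
  exact ⟨c, hc.trans (qBall_mono c hR'.le)⟩

theorem exists_qBall_subset (hN : IsQuasiNorm S N) (hP : IsOpen P) {x₀ : Fin n → ℝ}
    (hx₀ : x₀ ∈ P) : ∃ ε, 0 < ε ∧ qBall S N x₀ ε ⊆ P := by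
  obtain ⟨m, _, hm, _, hmN⟩ := hN.exists_gauge_sandwich
  have h0 : (0 : Fin n → ℝ) ∈ (fun h => S.mul x₀ h) ⁻¹' P := by
    rwa [Set.mem_preimage, S.mul_zero']
  obtain ⟨δ, hδ, hball⟩ := Metric.isOpen_iff.1 (hP.preimage (S.continuous_mul_left x₀)) 0 h0
  set t := min (δ / 2) 1
  refine ⟨m * t, by positivity, fun h hh => ?_⟩
  set y := S.mul (S.inv x₀) h
  have hy : S.gauge y ≤ t := ((mul_lt_mul_iff_right₀ hm).1 ((hmN y).1.trans_lt hh)).le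
  have hyδ : y ∈ Metric.ball 0 δ := by
    rw [mem_ball_zero_iff, pi_norm_lt_iff hδ]
    intro j
    rw [Real.norm_eq_abs]
    calc |y j| ≤ t ^ S.deg j := (S.gauge_le_iff (by positivity) y).1 hy j
      _ ≤ t := pow_le_of_le_one (by positivity) (min_le_right _ _)
          (by have := S.deg_pos j; omega)
      _ < δ := (min_le_left _ _).trans_lt (half_lt_self hδ)
  simpa only [Set.mem_preimage, y, S.mul_inv_cancel_left] using hball hyδ

theorem bddAbove_setOf_qBall_subset (hn : 0 < n) (hN : IsQuasiNorm S N)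
    (hS : S.VolumeLeftInvariant) (hP : volume P ≠ ⊤) :
    BddAbove {r : ℝ | ∃ c, qBall S N c r ⊆ P} := by
  have hV := measureReal_setOf_lt_one_pos hN
  refine ⟨max (volume.real P / volume.real {x | N x < 1}) 1, fun r ⟨c, hc⟩ => ?_⟩
  rcases le_or_gt r 1 with hr | hr
  · exact le_max_of_le_right hr
  refine le_max_of_le_left ((le_self_pow₀ hr.le (S.Q_ne_zero hn)).trans ?_)
  rw [le_div_iff₀ hV, ← measureReal_qBall hN hS c (by linarith)]
  exact measureReal_mono hc hP

theorem inRad_pos (hn : 0 < n) (hN : IsQuasiNorm S N) (hS : S.VolumeLeftInvariant)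
    (hP : IsOpen P) (hne : P.Nonempty) (hfin : volume P ≠ ⊤) : 0 < inRad S N P := by
  obtain ⟨x₀, hx₀⟩ := hne
  obtain ⟨ε, hε, hsub⟩ := exists_qBall_subset hN hP hx₀
  exact hε.trans_le (le_csSup (bddAbove_setOf_qBall_subset hn hN hS hfin) ⟨x₀, hsub⟩)

theorem exists_subset_qBall_pow_mul_le (hn : 0 < n) (hN : IsQuasiNorm S N)
    (hS : S.VolumeLeftInvariant) (hP : IsOpen P) (hne : P.Nonempty)
    (hbdd : Bornology.IsBounded P) {K : ℝ} (hK : 0 < K)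
    (hratio : outRad S N P ≤ K * inRad S N P) :
    ∃ c R, 0 < R ∧ P ⊆ qBall S N c R ∧
      R ^ S.Q * volume.real {x | N x < 1} ≤ (4 * K) ^ S.Q * volume.real P := by
  have hfin : volume P ≠ ⊤ := hbdd.measure_lt_top.ne
  set D := inRad S N P
  have hD : 0 < D := inRad_pos hn hN hS hP hne hfin
  obtain ⟨c, hc⟩ := exists_subset_qBall_of_outRad_lt hN hbdd (R := 2 * K * D) (by nlinarith)
  obtain ⟨c', hc'⟩ := exists_qBall_subset_of_lt_inRad hN (half_lt_self hD)
  refine ⟨c, 2 * K * D, by positivity, hc, ?_⟩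
  calc (2 * K * D) ^ S.Q * volume.real {x | N x < 1}
      = (4 * K) ^ S.Q * ((D / 2) ^ S.Q * volume.real {x | N x < 1}) := by
        rw [← mul_assoc, ← mul_pow]; ring_nf
    _ = (4 * K) ^ S.Q * volume.real (qBall S N c' (D / 2)) := by
        rw [measureReal_qBall hN hS c' (half_pos hD)]
    _ ≤ (4 * K) ^ S.Q * volume.real P :=
        mul_le_mul_of_nonneg_left (measureReal_mono hc' hfin) (by positivity)

end Radius

section Counting

variable {X J : Type*} {P : J → Set X} {M : ℕ}

theorem card_le_of_forall_mem_of_admissible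
    (hadm : ∀ j, {j' | (P j ∩ P j').Nonempty}.encard ≤ M) {x : X} {G : Finset J}
    (hG : ∀ j ∈ G, x ∈ P j) : G.card ≤ M := by
  rcases G.eq_empty_or_nonempty with rfl | ⟨j₀, hj₀⟩
  · simp
  have hsub : ↑G ⊆ {j' | (P j₀ ∩ P j').Nonempty} := fun j hj => ⟨x, hG j₀ hj₀, hG j hj⟩
  have := (Set.encard_mono hsub).trans (hadm j₀)
  rwa [Set.encard_coe_eq_coe_finsetCard, Nat.cast_le] at this

variable [MeasurableSpace X]

theorem sum_measure_le_of_admissible (μ : Measure X) (hP : ∀ j, MeasurableSet (P j))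
    (hadm : ∀ j, {j' | (P j ∩ P j').Nonempty}.encard ≤ M) {B : Set X} (hB : MeasurableSet B)
    (F : Finset J) (hFB : ∀ j ∈ F, P j ⊆ B) :
    ∑ j ∈ F, μ (P j) ≤ M * μ B := by
  classical
  have hpt : ∀ x, ∑ j ∈ F, (P j).indicator (1 : X → ENNReal) x ≤ M * B.indicator 1 x := by
    intro x
    by_cases hx : x ∈ B
    · have hsum : ∑ j ∈ F, (P j).indicator (1 : X → ENNReal) x
          = ((F.filter fun j => x ∈ P j).card : ENNReal) := by
        rw [← Finset.sum_boole]
        exact Finset.sum_congr rfl fun j _ => by simp [Set.indicator_apply]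
      rw [hsum, Set.indicator_of_mem hx, Pi.one_apply, mul_one]
      exact_mod_cast card_le_of_forall_mem_of_admissible hadm fun j hj =>
        (Finset.mem_filter.1 hj).2
    · rw [Finset.sum_eq_zero fun j hj =>
        Set.indicator_of_notMem (fun hxP => hx (hFB j hj hxP)) _]
      exact zero_le
  calc ∑ j ∈ F, μ (P j) = ∫⁻ x, ∑ j ∈ F, (P j).indicator 1 x ∂μ := by
        rw [lintegral_finsetSum _ fun j _ => measurable_one.indicator (hP j)]
        simp only [lintegral_indicator_one (hP _)]
    _ ≤ ∫⁻ x, M * B.indicator 1 x ∂μ := lintegral_mono hpt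
    _ = M * μ B := by
        rw [lintegral_const_mul _ (measurable_one.indicator hB), lintegral_indicator_one hB]

theorem card_mul_le_measureReal_of_admissible (μ : Measure X) (hP : ∀ j, MeasurableSet (P j))
    (hadm : ∀ j, {j' | (P j ∩ P j').Nonempty}.encard ≤ M) {B : Set X} (hB : MeasurableSet B)
    (hBfin : μ B ≠ ⊤) {F : Finset J} (hFB : ∀ j ∈ F, P j ⊆ B) {w : ℝ}
    (hw : ∀ j ∈ F, w ≤ μ.real (P j)) :
    F.card * w ≤ M * μ.real B := by
  have hfin : ∀ j ∈ F, μ (P j) ≠ ⊤ := fun j hj =>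
    ne_top_of_le_ne_top hBfin (measure_mono (hFB j hj))
  calc F.card * w = ∑ j ∈ F, w := by rw [Finset.sum_const, nsmul_eq_mul]
    _ ≤ ∑ j ∈ F, μ.real (P j) := Finset.sum_le_sum hw
    _ = (∑ j ∈ F, μ (P j)).toReal := (ENNReal.toReal_sum hfin).symm
    _ ≤ (M * μ B).toReal := ENNReal.toReal_mono (ENNReal.mul_ne_top (by simp) hBfin)
        (sum_measure_le_of_admissible μ hP hadm hB F hFB)
    _ = M * μ.real B := by rw [ENNReal.toReal_mul, ENNReal.toReal_natCast, measureReal_def]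

end Counting

theorem Set.encard_le_coe_of_forall_finset_card_le {α : Type*} {s : Set α} {k : ℕ}
    (h : ∀ F : Finset α, ↑F ⊆ s → F.card ≤ k) : s.encard ≤ k := by
  rcases s.finite_or_infinite with hs | hs
  · rw [hs.encard_eq_coe_toFinset_card]
    exact_mod_cast h hs.toFinset (by simp)
  · obtain ⟨t, hts, htfin, htcard⟩ := hs.exists_subset_ncard_eq (k + 1)
    have := h htfin.toFinset (by simpa using hts)
    rw [Set.ncard_eq_toFinset_card t htfin] at htcard
    omega

theorem rpow_le_rpow_abs_mul_rpow {x y A : ℝ} (β : ℝ) (hx : 0 < x) (hy : 0 < y)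
    (hxy : x ≤ A * y) (hyx : y ≤ A * x) : x ^ β ≤ A ^ |β| * y ^ β := by
  have hA : 0 < A := pos_of_mul_pos_left (hx.trans_le hxy) hy.le
  rcases le_total 0 β with hβ | hβ
  · rw [abs_of_nonneg hβ, ← Real.mul_rpow hA.le hy.le]
    exact Real.rpow_le_rpow hx.le hxy hβ
  · rw [abs_of_nonpos hβ, Real.rpow_neg hA.le, ← Real.inv_rpow hA.le,
      ← Real.mul_rpow (inv_nonneg.2 hA.le) hy.le]
    exact Real.rpow_le_rpow_of_nonpos (by positivity) (by rwa [inv_mul_le_iff₀ hA]) hβ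

namespace GenAlphaCovering

variable {n : ℕ} {S : StratifiedGroup n} {α : ℝ} {I J : Type*} {N N₁ N₂ : (Fin n → ℝ) → ℝ}

theorem measureReal_pos (Cov : GenAlphaCovering S N α I) (i : I) :
    0 < volume.real (Cov.P i) :=
  ENNReal.toReal_pos ((Cov.isOpen' i).measure_pos volume (Cov.nonempty' i)).ne'
    (Cov.bounded' i).measure_lt_top.ne

theorem exists_forall_subset_qBall (hn : 0 < n) (hN : IsQuasiNorm S N)
    (hS : S.VolumeLeftInvariant) (Cov : GenAlphaCovering S N α I) :
    ∃ κ : ℝ, 0 < κ ∧ ∀ i, ∃ c,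
      Cov.P i ⊆ qBall S N c ((κ * volume.real (Cov.P i)) ^ (S.Q : ℝ)⁻¹) := by
  obtain ⟨K, hK, hratio⟩ := Cov.ratio
  have hV := measureReal_setOf_lt_one_pos hN
  refine ⟨(4 * K) ^ S.Q / volume.real {x | N x < 1}, by positivity, fun i => ?_⟩
  obtain ⟨c, R, hR, hPR, hvol⟩ := exists_subset_qBall_pow_mul_le hn hN hS (Cov.isOpen' i)
    (Cov.nonempty' i) (Cov.bounded' i) (by linarith) (hratio i)
  refine ⟨c, hPR.trans (qBall_mono c ?_)⟩
  have hv := Cov.measureReal_pos i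
  have hQ : (0 : ℝ) < S.Q := by exact_mod_cast (S.Q_ne_zero hn).bot_lt
  rw [Real.le_rpow_inv_iff_of_pos hR.le (by positivity) hQ, Real.rpow_natCast,
    div_mul_eq_mul_div, le_div_iff₀ hV]
  exact hvol

theorem exists_measureReal_le_mul_of_inter_nonempty (h₁ : IsQuasiNorm S N₁)
    (h₂ : IsQuasiNorm S N₂) (Cov₁ : GenAlphaCovering S N₁ α I) (Cov₂ : GenAlphaCovering S N₂ α J) :
    ∃ C : ℝ, 0 < C ∧ ∀ i j, (Cov₂.P j ∩ Cov₁.P i).Nonempty →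
      volume.real (Cov₂.P j) ≤ C * volume.real (Cov₁.P i) := by
  obtain ⟨a, ha, hcmp⟩ := h₁.exists_comparable h₂
  obtain ⟨c₁, hc₁, hsize₁⟩ := Cov₁.size
  obtain ⟨c₂, hc₂, hsize₂⟩ := Cov₂.size
  have ha₀ : 0 < a := by linarith
  have hweight : ∀ u v : ℝ, 0 ≤ u → u ≤ a * v → 1 + u ^ 2 ≤ a ^ 2 * (1 + v ^ 2) :=
    fun u v hu h => by nlinarith [mul_self_le_mul_self hu h]
  set β := α * (S.Q : ℝ) / 2
  refine ⟨c₂ * (a ^ 2) ^ |β| * c₁, by positivity, fun i j ⟨ξ, hξ₂, hξ₁⟩ => ?_⟩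
  calc volume.real (Cov₂.P j) ≤ c₂ * (1 + N₂ ξ ^ 2) ^ β := (hsize₂ j ξ hξ₂).1
    _ ≤ c₂ * ((a ^ 2) ^ |β| * (1 + N₁ ξ ^ 2) ^ β) := by
        gcongr
        exact rpow_le_rpow_abs_mul_rpow β (by positivity) (by positivity)
          (hweight _ _ (h₂.nonneg ξ) (hcmp ξ).1) (hweight _ _ (h₁.nonneg ξ) (hcmp ξ).2)
    _ ≤ c₂ * ((a ^ 2) ^ |β| * (c₁ * volume.real (Cov₁.P i))) := by
        gcongr
        exact (hsize₁ i ξ hξ₁).2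
    _ = c₂ * (a ^ 2) ^ |β| * c₁ * volume.real (Cov₁.P i) := by ring

theorem exists_qBall_superset_of_inter_nonempty (hn : 0 < n) (h₁ : IsQuasiNorm S N₁)
    (h₂ : IsQuasiNorm S N₂) (hS : S.VolumeLeftInvariant)
    (Cov₁ : GenAlphaCovering S N₁ α I) (Cov₂ : GenAlphaCovering S N₂ α J) :
    ∃ L : ℝ, ∀ i, ∃ c R, (∀ j, (Cov₂.P j ∩ Cov₁.P i).Nonempty → Cov₂.P j ⊆ qBall S N₂ c R) ∧
      volume.real (qBall S N₂ c R) ≤ L * volume.real (Cov₁.P i) := by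
  obtain ⟨a, ha, hcmp⟩ := h₁.exists_comparable h₂
  obtain ⟨Λ, hΛ, hsub⟩ := h₂.exists_subset_qBall_of_inter_nonempty
  obtain ⟨C, -, hvol⟩ := exists_measureReal_le_mul_of_inter_nonempty h₁ h₂ Cov₁ Cov₂
  obtain ⟨κ₁, hκ₁, hball₁⟩ := Cov₁.exists_forall_subset_qBall hn h₁ hS
  obtain ⟨κ₂, hκ₂, hball₂⟩ := Cov₂.exists_forall_subset_qBall hn h₂ hS
  set κ := max κ₁ (κ₂ * C)
  refine ⟨(Λ * a) ^ S.Q * κ * volume.real {x | N₂ x < 1}, fun i => ?_⟩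
  set v := volume.real (Cov₁.P i)
  have hv : 0 < v := Cov₁.measureReal_pos i
  set ρ := (κ * v) ^ (S.Q : ℝ)⁻¹
  have hρ : 0 < ρ := by positivity
  have hle_ρ : ∀ w, 0 ≤ w → w ≤ κ * v → w ^ (S.Q : ℝ)⁻¹ ≤ ρ := fun w hw h =>
    Real.rpow_le_rpow hw h (by positivity)
  have hρ_le : ρ ≤ a * ρ := le_mul_of_one_le_left hρ.le ha
  obtain ⟨c, hc⟩ := hball₁ i
  have hP₁ : Cov₁.P i ⊆ qBall S N₂ c (a * ρ) :=
    (hc.trans (qBall_mono c (hle_ρ _ (by positivity) (by gcongr; exact le_max_left _ _)))).trans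
      (qBall_subset_qBall_of_le_mul (by linarith) (fun x => (hcmp x).1) c ρ)
  refine ⟨c, Λ * (a * ρ), fun j hj => ?_, ?_⟩
  · obtain ⟨cj, hcj⟩ := hball₂ j
    refine hsub _ _ c cj _ hP₁ (hcj.trans (qBall_mono cj ((hle_ρ _ ?_ ?_).trans hρ_le)))
      (by rwa [Set.inter_comm])
    · exact mul_nonneg hκ₂.le measureReal_nonneg
    · calc κ₂ * volume.real (Cov₂.P j) ≤ κ₂ * (C * v) := by gcongr; exact hvol i j hj
        _ = κ₂ * C * v := by ring
        _ ≤ κ * v := by gcongr; exact le_max_right _ _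
  · have hρQ : ρ ^ S.Q = κ * v := Real.rpow_inv_natCast_pow (by positivity) (S.Q_ne_zero hn)
    rw [measureReal_qBall h₂ hS c (by positivity), ← mul_assoc, mul_pow, hρQ]
    exact le_of_eq (by ring)

theorem exists_encard_inter_nonempty_le (hn : 0 < n) (h₁ : IsQuasiNorm S N₁)
    (h₂ : IsQuasiNorm S N₂) (hS : S.VolumeLeftInvariant)
    (Cov₁ : GenAlphaCovering S N₁ α I) (Cov₂ : GenAlphaCovering S N₂ α J) :
    ∃ M : ℕ, ∀ i, {j | (Cov₂.P j ∩ Cov₁.P i).Nonempty}.encard ≤ M := by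
  obtain ⟨L, hL⟩ := exists_qBall_superset_of_inter_nonempty hn h₁ h₂ hS Cov₁ Cov₂
  obtain ⟨C, hC, hvol⟩ := exists_measureReal_le_mul_of_inter_nonempty h₂ h₁ Cov₂ Cov₁
  obtain ⟨M, hadm⟩ := Cov₂.admissible
  refine ⟨⌈M * L * C⌉₊, fun i => Set.encard_le_coe_of_forall_finset_card_le fun F hF => ?_⟩
  obtain ⟨c, R, hsub, hR⟩ := hL i
  have hv := Cov₁.measureReal_pos i
  have hcount : F.card * (volume.real (Cov₁.P i) / C) ≤ M * volume.real (qBall S N₂ c R) :=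
    card_mul_le_measureReal_of_admissible volume (fun j => (Cov₂.isOpen' j).measurableSet) hadm
      (isOpen_qBall h₂ c R).measurableSet (volume_qBall_lt_top h₂ hS c R).ne
      (fun j hj => hsub j (hF hj))
      (fun j hj => (div_le_iff₀' hC).2 (hvol j i (by rw [Set.inter_comm]; exact hF hj)))
  have hcard : (F.card : ℝ) ≤ M * L * C := by
    refine le_of_mul_le_mul_right (hcount.trans ?_) (div_pos hv hC)
    calc M * volume.real (qBall S N₂ c R) ≤ M * (L * volume.real (Cov₁.P i)) := by gcongr
      _ = M * L * C * (volume.real (Cov₁.P i) / C) := by field_simp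
  exact_mod_cast hcard.trans (Nat.le_ceil _)

end GenAlphaCovering

theorem encard_inter_nonempty_le_of_subsingleton {X I J : Type*} [Subsingleton X]
    {P : I → Set X} {Q : J → Set X} (hQ : ∀ j, (Q j).Nonempty) {M : ℕ}
    (hadm : ∀ j, {j' | (Q j ∩ Q j').Nonempty}.encard ≤ M) (i : I) :
    {j | (Q j ∩ P i).Nonempty}.encard ≤ M := by
  rcases isEmpty_or_nonempty J with hJ | hJ
  · simp [Set.eq_empty_of_isEmpty]
  obtain ⟨j₀⟩ := hJ
  refine (Set.encard_mono fun j _ => ?_).trans (hadm j₀)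
  obtain ⟨x, hx⟩ := hQ j₀
  obtain ⟨y, hy⟩ := hQ j
  exact ⟨x, hx, Subsingleton.elim y x ▸ hy⟩

theorem genAlphaCoverings_weakly_equivalent_general {n : ℕ} {I J : Type*}
    (S : StratifiedGroup n) (N₁ N₂ : (Fin n → ℝ) → ℝ)
    (h₁ : IsQuasiNorm S N₁) (h₂ : IsQuasiNorm S N₂)
    (hHaar : ∀ (g : Fin n → ℝ) (A : Set (Fin n → ℝ)),
      volume ((fun h => S.mul g h) ⁻¹' A) = volume A)
    (α : ℝ)
    (Cov₁ : GenAlphaCovering S N₁ α I) (Cov₂ : GenAlphaCovering S N₂ α J) :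
    (∃ M : ℕ, ∀ i : I, {j : J | (Cov₂.P j ∩ Cov₁.P i).Nonempty}.encard ≤ (M : ℕ∞)) ∧
    (∃ M : ℕ, ∀ j : J, {i : I | (Cov₁.P i ∩ Cov₂.P j).Nonempty}.encard ≤ (M : ℕ∞)) := by
  rcases Nat.eq_zero_or_pos n with rfl | hn
  · obtain ⟨M₁, hadm₁⟩ := Cov₁.admissible
    obtain ⟨M₂, hadm₂⟩ := Cov₂.admissible
    exact ⟨⟨M₂, encard_inter_nonempty_le_of_subsingleton Cov₂.nonempty' hadm₂⟩,
      ⟨M₁, encard_inter_nonempty_le_of_subsingleton Cov₁.nonempty' hadm₁⟩⟩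
  · exact ⟨Cov₁.exists_encard_inter_nonempty_le hn h₁ h₂ hHaar Cov₂,
      Cov₂.exists_encard_inter_nonempty_le hn h₂ h₁ hHaar Cov₁⟩

/-- Any two generalized `α`-coverings for the same stratified Lie group
(possibly with respect to different homogeneous quasi-norms) are weakly equivalent. -/
theorem genAlphaCoverings_weakly_equivalent {n : ℕ} {I J : Type*}
    (S : StratifiedGroup n) (N₁ N₂ : (Fin n → ℝ) → ℝ)
    (h₁ : IsQuasiNorm S N₁) (h₂ : IsQuasiNorm S N₂)
    (hHaar : ∀ (g : Fin n → ℝ) (A : Set (Fin n → ℝ)),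
      volume ((fun h => S.mul g h) ⁻¹' A) = volume A)
    (α : ℝ) (hα₀ : 0 ≤ α) (hα₁ : α ≤ 1)
    (Cov₁ : GenAlphaCovering S N₁ α I) (Cov₂ : GenAlphaCovering S N₂ α J) :
    (∃ M : ℕ, ∀ i : I, {j : J | (Cov₂.P j ∩ Cov₁.P i).Nonempty}.encard ≤ (M : ℕ∞)) ∧
    (∃ M : ℕ, ∀ j : J, {i : I | (Cov₁.P i ∩ Cov₂.P j).Nonempty}.encard ≤ (M : ℕ∞)) :=
  genAlphaCoverings_weakly_equivalent_general S N₁ N₂ h₁ h₂ hHaar α Cov₁ Cov₂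
end

section
/- Let (ℝⁿ, *_G) be a rational stratified Lie group of step s > 1. Then the identity map Id : (ℝⁿ, d_{B(G)}) → (ℝⁿ, d_{B(ℝⁿ)}) is not a quasi-isometry; consequently the dyadic covering B(G) is not equivalent to the Euclidean dyadic covering B(ℝⁿ). Concretely, the points p(m) = (2^m, 0, …, 0) and q(m) = (0, …, 0, 2^{sm+1}) satisfy d_{B(G)}(p(m), q(m)) = 1 for all m ∈ ℕ while d_{B(ℝⁿ)}(p(m), q(m)) → ∞ as m → ∞. -/
open MeasureTheory

/-- The homogeneous quasi-norm `‖x‖₂ = (∑ⱼ |xⱼ|^{2/vⱼ})^{1/2}` adapted to the degrees `v`. -/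
noncomputable def nrm2 {n : ℕ} (v : Fin n → ℕ) (x : Fin n → ℝ) : ℝ :=
  (∑ j, |x j| ^ ((2 : ℝ) / (v j : ℝ))) ^ ((1 : ℝ) / 2)

/-- The members of the Besov covering `𝓑(G)`: `D₀(G) = B^{‖·‖₂}(0,2)` and, for `m ≥ 1`,
the dyadic annuli `D_m(G) = B^{‖·‖₂}(0, 2^{m+1}) \ closure (B^{‖·‖₂}(0, 2^{m-1}))`. -/
noncomputable def besovSet {n : ℕ} (S : StratifiedGroup n) (m : ℕ) : Set (Fin n → ℝ) :=
  if m = 0 then {x | nrm2 S.deg x < 2}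
  else {x | nrm2 S.deg x < 2 ^ (m + 1)} \ closure {x | nrm2 S.deg x < 2 ^ (m - 1)}

/-- A chain of `k+1` members of the covering `Qc` from `x` to `y`, with consecutive
members intersecting. -/
def HasChain {V : Type*} {I : Type*} (Qc : I → Set V) (x y : V) (k : ℕ) : Prop :=
  ∃ c : Fin (k + 1) → I, x ∈ Qc (c 0) ∧ y ∈ Qc (c (Fin.last k)) ∧
    ∀ l : Fin k, (Qc (c l.castSucc) ∩ Qc (c l.succ)).Nonempty

open Classical in
/-- The metric `d_Q` associated to a concatenation: the minimal length of a chain of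
members of the covering joining `x` to `y` (and `0` if `x = y`). -/
noncomputable def chainDist {V : Type*} {I : Type*} (Qc : I → Set V) (x y : V) : ℕ :=
  if x = y then 0 else 1 + sInf {k : ℕ | HasChain Qc x y k}

/-- The Euclidean dyadic (Besov) covering of `ℝⁿ`. -/
noncomputable def besovSetE (n : ℕ) (m : ℕ) : Set (Fin n → ℝ) :=
  if m = 0 then {x | Real.sqrt (∑ j, x j ^ 2) < 2}
  else {x | Real.sqrt (∑ j, x j ^ 2) < 2 ^ (m + 1)}
    \ closure {x | Real.sqrt (∑ j, x j ^ 2) < 2 ^ (m - 1)}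

/-- The point `p(m) = (2^m, 0, …, 0)`. -/
noncomputable def pPt (n m : ℕ) : Fin n → ℝ :=
  fun j => if (j : ℕ) = 0 then (2 : ℝ) ^ m else 0

/-- The point `q(m) = (0, …, 0, 2^{sm+1})`. -/
noncomputable def qPt (n s m : ℕ) : Fin n → ℝ :=
  fun j => if (j : ℕ) = n - 1 then (2 : ℝ) ^ (s * m + 1) else 0

/-!
In homogeneous coordinates the last coordinate has degree `s`, so `q(m)`, whose Euclidean size
`2^{sm+1}` is far beyond `p(m)`'s, still has homogeneous size `2^{m + 1/s}` and lies in the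
same annulus `D_m(G)` as `p(m)`. In the Euclidean covering, meeting annuli have indices
differing by at most one, so every chain from `p(m)` (index `≤ m + 1`) to `q(m)`
(index `≥ sm + 1`) has at least `(s - 1)m` links.
-/

section Chains

variable {V : Type*}

theorem chainDist_eq_one {I : Type*} {Qc : I → Set V} {x y : V} {i : I} (hxy : x ≠ y)
    (hx : x ∈ Qc i) (hy : y ∈ Qc i) : chainDist Qc x y = 1 := by
  have hchain : HasChain Qc x y 0 := ⟨fun _ => i, hx, hy, fun l => l.elim0⟩
  rw [chainDist, if_neg hxy, Nat.sInf_eq_zero.2 (Or.inl hchain)]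

theorem lt_chainDist {I : Type*} {Qc : I → Set V} {x y : V} {k : ℕ} (hxy : x ≠ y)
    (hne : ∃ j, HasChain Qc x y j) (hk : ∀ j, HasChain Qc x y j → k ≤ j) :
    k < chainDist Qc x y := by
  rw [chainDist, if_neg hxy]
  have : k ≤ sInf {j | HasChain Qc x y j} := le_csInf hne hk
  omega

theorem hasChain_of_inter_succ {Qc : ℕ → Set V} (hQc : ∀ a, (Qc a ∩ Qc (a + 1)).Nonempty)
    {x y : V} {a b : ℕ} (hab : a ≤ b) (hx : x ∈ Qc a) (hy : y ∈ Qc b) :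
    HasChain Qc x y (b - a) := by
  refine ⟨fun l => a + l, by simpa using hx, ?_, fun l => ?_⟩
  · simpa [Nat.add_sub_cancel' hab] using hy
  · simpa [Nat.add_assoc] using hQc (a + l)

theorem HasChain.exists_le_add {Qc : ℕ → Set V}
    (hQc : ∀ a b, (Qc a ∩ Qc b).Nonempty → b ≤ a + 1) {x y : V} {k : ℕ}
    (h : HasChain Qc x y k) : ∃ a b, x ∈ Qc a ∧ y ∈ Qc b ∧ b ≤ a + k := by
  obtain ⟨c, hx, hy, hlink⟩ := h
  have hstep : ∀ i (hi : i ≤ k), c ⟨i, by omega⟩ ≤ c 0 + i := by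
    intro i
    induction i with
    | zero => intro _; rfl
    | succ i ih =>
      intro hi
      have := hQc _ _ (hlink ⟨i, by omega⟩)
      simp only [Fin.castSucc_mk, Fin.succ_mk] at this
      have := ih (by omega)
      omega
  exact ⟨c 0, c (Fin.last k), hx, hy, hstep k le_rfl⟩

end Chains

section DyadicAnnulus

variable {V : Type*} [TopologicalSpace V] {N : V → ℝ}

noncomputable def dyadicAnnulus (N : V → ℝ) (m : ℕ) : Set V :=
  if m = 0 then {x | N x < 2}
  else {x | N x < 2 ^ (m + 1)} \ closure {x | N x < 2 ^ (m - 1)}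

theorem lt_of_mem_dyadicAnnulus {m : ℕ} {x : V} (hx : x ∈ dyadicAnnulus N m) :
    N x < 2 ^ (m + 1) := by
  unfold dyadicAnnulus at hx
  split_ifs at hx with hm
  · simpa [hm] using hx
  · exact hx.1

theorem le_of_mem_dyadicAnnulus {m : ℕ} {x : V} (hm : m ≠ 0) (hx : x ∈ dyadicAnnulus N m) :
    2 ^ (m - 1) ≤ N x := by
  rw [dyadicAnnulus, if_neg hm] at hx
  exact not_lt.1 fun h => hx.2 (subset_closure h)

theorem le_succ_of_dyadicAnnulus_inter {a b : ℕ}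
    (h : (dyadicAnnulus N a ∩ dyadicAnnulus N b).Nonempty) : b ≤ a + 1 := by
  obtain ⟨x, hxa, hxb⟩ := h
  rcases Nat.eq_zero_or_pos b with hb | hb
  · omega
  have : (2 : ℝ) ^ (b - 1) < 2 ^ (a + 1) :=
    (le_of_mem_dyadicAnnulus hb.ne' hxb).trans_lt (lt_of_mem_dyadicAnnulus hxa)
  have := (pow_lt_pow_iff_right₀ one_lt_two).1 this
  omega

theorem mem_dyadicAnnulus_of_eq_rpow (hN : Continuous N) {m : ℕ} {θ : ℝ} {x : V}
    (hθ₀ : -1 < θ) (hθ₁ : θ < 1) (hx : N x = 2 ^ ((m : ℝ) + θ)) :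
    x ∈ dyadicAnnulus N m := by
  have hupper : N x < 2 ^ (m + 1) := by
    rw [hx, ← Real.rpow_natCast, Real.rpow_lt_rpow_left_iff one_lt_two]
    push_cast
    linarith
  unfold dyadicAnnulus
  split_ifs with hm
  · simpa [hm] using hupper
  refine ⟨hupper, fun hcl => ?_⟩
  have hle : N x ≤ 2 ^ (m - 1) :=
    closure_minimal (fun _ h => le_of_lt h) (isClosed_le hN continuous_const) hcl
  rw [hx, ← Real.rpow_natCast, Real.rpow_le_rpow_left_iff one_lt_two,
    Nat.cast_pred (Nat.pos_of_ne_zero hm)] at hle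
  linarith

end DyadicAnnulus

theorem continuous_nrm2 {n : ℕ} (v : Fin n → ℕ) : Continuous (nrm2 v) :=
  (Real.continuous_rpow_const (by norm_num)).comp <| continuous_finsetSum _ fun j _ =>
    (Real.continuous_rpow_const (by positivity)).comp (continuous_apply j).abs

theorem nrm2_single {n : ℕ} {v : Fin n → ℕ} (hv : ∀ j, v j ≠ 0) (i : Fin n) (t : ℝ) :
    nrm2 v (Pi.single i t) = |t| ^ ((1 : ℝ) / v i) := by
  rw [nrm2, Finset.sum_eq_single i, Pi.single_eq_same, ← Real.rpow_mul (abs_nonneg t)]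
  · congr 1
    ring
  · intro j _ hj
    rw [Pi.single_eq_of_ne hj, abs_zero, Real.zero_rpow]
    have : (v j : ℝ) ≠ 0 := Nat.cast_ne_zero.2 (hv j)
    positivity
  · simp

noncomputable def euclidNorm {n : ℕ} (x : Fin n → ℝ) : ℝ := Real.sqrt (∑ j, x j ^ 2)

theorem continuous_euclidNorm {n : ℕ} : Continuous (euclidNorm (n := n)) := by
  unfold euclidNorm
  fun_prop

theorem euclidNorm_single {n : ℕ} (i : Fin n) (t : ℝ) : euclidNorm (Pi.single i t) = |t| := by
  simp [euclidNorm, Pi.single_apply, Real.sqrt_sq_eq_abs]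

theorem besovSet_eq_dyadicAnnulus {n : ℕ} (S : StratifiedGroup n) :
    besovSet S = dyadicAnnulus (nrm2 S.deg) := rfl

theorem besovSetE_eq_dyadicAnnulus (n : ℕ) :
    besovSetE n = dyadicAnnulus euclidNorm := rfl

theorem besovSetE_inter_succ_nonempty {n : ℕ} (hn : 0 < n) (a : ℕ) :
    (besovSetE n a ∩ besovSetE n (a + 1)).Nonempty := by
  rw [besovSetE_eq_dyadicAnnulus]
  have hnorm : euclidNorm (Pi.single (⟨0, hn⟩ : Fin n) ((2 : ℝ) ^ ((a : ℝ) + 1 / 2))) =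
      2 ^ ((a : ℝ) + 1 / 2) := by
    rw [euclidNorm_single, abs_of_pos (by positivity)]
  have hnorm' : euclidNorm (Pi.single (⟨0, hn⟩ : Fin n) ((2 : ℝ) ^ ((a : ℝ) + 1 / 2))) =
      2 ^ (((a + 1 : ℕ) : ℝ) + -1 / 2) := by
    rw [hnorm]
    push_cast
    ring_nf
  exact ⟨_,
    mem_dyadicAnnulus_of_eq_rpow continuous_euclidNorm (by norm_num) (by norm_num) hnorm,
    mem_dyadicAnnulus_of_eq_rpow continuous_euclidNorm (by norm_num) (by norm_num) hnorm'⟩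

theorem pPt_eq_single {n : ℕ} (hn : 0 < n) (m : ℕ) :
    pPt n m = Pi.single ⟨0, hn⟩ (2 ^ m) := by
  ext j
  simp [pPt, Pi.single_apply, Fin.ext_iff]

theorem qPt_eq_single {n : ℕ} (h : n - 1 < n) (s m : ℕ) :
    qPt n s m = Pi.single ⟨n - 1, h⟩ (2 ^ (s * m + 1)) := by
  ext j
  simp [qPt, Pi.single_apply, Fin.ext_iff]

theorem pPt_ne_qPt {n : ℕ} (hn : 1 < n) (s m : ℕ) : pPt n m ≠ qPt n s m := by
  intro h
  have := congrFun h ⟨0, by omega⟩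
  simp [pPt, qPt, show 0 ≠ n - 1 by omega] at this

theorem chainDist_besovSet_pPt_qPt {n : ℕ} (hn : 1 < n) (S : StratifiedGroup n)
    (hdeg1 : S.deg ⟨0, Nat.zero_lt_of_lt hn⟩ = 1)
    (hstep : 2 ≤ S.deg ⟨n - 1, Nat.sub_lt (Nat.zero_lt_of_lt hn) Nat.one_pos⟩) (m : ℕ) :
    chainDist (besovSet S) (pPt n m)
      (qPt n (S.deg ⟨n - 1, Nat.sub_lt (Nat.zero_lt_of_lt hn) Nat.one_pos⟩) m) = 1 := by
  set s := S.deg ⟨n - 1, Nat.sub_lt (Nat.zero_lt_of_lt hn) Nat.one_pos⟩ with hs_def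
  have hdeg : ∀ j, S.deg j ≠ 0 := fun j => Nat.one_le_iff_ne_zero.1 (S.deg_pos j)
  have hs : (0 : ℝ) < s := by positivity
  have hp : nrm2 S.deg (pPt n m) = 2 ^ ((m : ℝ) + 0) := by
    rw [pPt_eq_single (by omega), nrm2_single hdeg, hdeg1, abs_of_pos (by positivity)]
    simp
  have hq : nrm2 S.deg (qPt n s m) = 2 ^ ((m : ℝ) + 1 / s) := by
    rw [qPt_eq_single (Nat.sub_lt (Nat.zero_lt_of_lt hn) Nat.one_pos), nrm2_single hdeg,
      abs_of_pos (by positivity), ← hs_def, ← Real.rpow_natCast, ← Real.rpow_mul zero_le_two]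
    congr 1
    field_simp
    push_cast
    ring
  have hs' : 1 / (s : ℝ) < 1 := by
    rw [div_lt_one hs]
    exact_mod_cast hstep
  rw [besovSet_eq_dyadicAnnulus]
  exact chainDist_eq_one (pPt_ne_qPt hn s m)
    (mem_dyadicAnnulus_of_eq_rpow (continuous_nrm2 _) (by norm_num) (by norm_num) hp)
    (mem_dyadicAnnulus_of_eq_rpow (continuous_nrm2 _) (by linarith [one_div_pos.2 hs]) hs' hq)

theorem lt_chainDist_besovSetE_pPt_qPt {n : ℕ} (hn : 1 < n) {s : ℕ} (hs : 1 ≤ s) (m : ℕ) :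
    (s - 1) * m < chainDist (besovSetE n) (pPt n m) (qPt n s m) := by
  have hp : euclidNorm (pPt n m) = 2 ^ m := by
    rw [pPt_eq_single (by omega), euclidNorm_single, abs_of_pos (by positivity)]
  have hq : euclidNorm (qPt n s m) = 2 ^ (s * m + 1) := by
    rw [qPt_eq_single (by omega), euclidNorm_single, abs_of_pos (by positivity)]
  have hpE : pPt n m ∈ besovSetE n m := by
    rw [besovSetE_eq_dyadicAnnulus]
    exact mem_dyadicAnnulus_of_eq_rpow continuous_euclidNorm (θ := 0) (by norm_num)
      (by norm_num) (by simp [hp])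
  have hqE : qPt n s m ∈ besovSetE n (s * m + 1) := by
    rw [besovSetE_eq_dyadicAnnulus]
    exact mem_dyadicAnnulus_of_eq_rpow continuous_euclidNorm (θ := 0) (by norm_num)
      (by norm_num) (by rw [hq, add_zero, ← Real.rpow_natCast])
  refine lt_chainDist (pPt_ne_qPt hn s m)
    ⟨_, hasChain_of_inter_succ (besovSetE_inter_succ_nonempty (by omega))
      (by nlinarith) hpE hqE⟩ fun k hk => ?_
  rw [besovSetE_eq_dyadicAnnulus] at hk
  obtain ⟨a, b, hpa, hqb, hab⟩ := hk.exists_le_add fun _ _ => le_succ_of_dyadicAnnulus_inter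
  have ha : a ≤ m + 1 := by
    rcases Nat.eq_zero_or_pos a with ha | ha
    · omega
    have := le_of_mem_dyadicAnnulus ha.ne' hpa
    rw [hp] at this
    have := (pow_le_pow_iff_right₀ one_lt_two).1 this
    omega
  have hb : s * m + 1 < b + 1 := by
    have := lt_of_mem_dyadicAnnulus hqb
    rwa [hq, pow_lt_pow_iff_right₀ one_lt_two] at this
  have : (s - 1) * m = s * m - m := Nat.sub_one_mul s m
  omega

/-- For a stratified Lie group of step `s > 1` (coordinates ordered with
nondecreasing degrees, first coordinate of degree `1`, last of degree `s ≥ 2`), the points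
`p(m) = (2^m,0,…,0)` and `q(m) = (0,…,0,2^{sm+1})` are at `d_{𝓑(G)}`-distance `1` for all
`m`, while their `d_{𝓑(ℝⁿ)}`-distance tends to `∞`; consequently the identity map
`(ℝⁿ, d_{𝓑(G)}) → (ℝⁿ, d_{𝓑(ℝⁿ)})` is not a quasi-isometry, i.e. the two dyadic coverings
are not equivalent. -/
theorem besov_coverings_not_quasi_isometric {n : ℕ} (hn : 1 < n)
    (S : StratifiedGroup n)
    (hdeg1 : S.deg ⟨0, by omega⟩ = 1)
    (hstep : 2 ≤ S.deg ⟨n - 1, by omega⟩) :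
    (∀ m : ℕ,
      chainDist (besovSet S) (pPt n m) (qPt n (S.deg ⟨n - 1, by omega⟩) m) = 1) ∧
    Filter.Tendsto
      (fun m : ℕ =>
        chainDist (besovSetE n) (pPt n m) (qPt n (S.deg ⟨n - 1, by omega⟩) m))
      Filter.atTop Filter.atTop ∧
    ¬ ∃ Lc Cc : ℝ, 0 < Lc ∧ 0 ≤ Cc ∧ ∀ x y : Fin n → ℝ,
        (chainDist (besovSet S) x y : ℝ) / Lc - Cc ≤ (chainDist (besovSetE n) x y : ℝ) ∧
        (chainDist (besovSetE n) x y : ℝ) ≤ Lc * (chainDist (besovSet S) x y : ℝ) + Cc := by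
  set s := S.deg ⟨n - 1, by omega⟩
  have hG := chainDist_besovSet_pPt_qPt hn S hdeg1 hstep
  have hE : Filter.Tendsto (fun m => chainDist (besovSetE n) (pPt n m) (qPt n s m))
      Filter.atTop Filter.atTop :=
    Filter.tendsto_atTop_mono (fun m => (Nat.le_mul_of_pos_left m (by omega)).trans
      (lt_chainDist_besovSetE_pPt_qPt hn (by omega) m).le) Filter.tendsto_id
  refine ⟨hG, hE, fun ⟨L, C, _, _, hQI⟩ => ?_⟩
  obtain ⟨m, hm⟩ := ((tendsto_natCast_atTop_atTop (R := ℝ)).comp hE).eventually_gt_atTop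
    (L + C) |>.exists
  have hbound := (hQI (pPt n m) (qPt n s m)).2
  rw [hG m, Nat.cast_one, mul_one] at hbound
  exact absurd hm (not_lt.2 hbound)
end
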